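/- arXiv:1904.04333 — 5 statements merged into one kernel-verified Lean document; each statement's English description precedes it below -/
import Mathlib

section
/- For the (s+1)×(s+1) matrix Θ_s with entries θ_{l,k} (0 ≤ l,k ≤ s) defined by θ_{l,k} = 1 if l = 0; θ_{l,k} = 2^{l-1} if 0 < l ≤ s - k; θ_{l,k} = -2^{l-1} if l + k = s + 1; and θ_{l,k} = 0 if l + k > s + 1, one has Θ_s² = 2^s · I_{s+1}. -/
/-- The matrix `Θ_s` from the MacWilliams identity for shape enumerators of binary NRT-codes. -/
def Theta (s : ℕ) : Matrix (Fin (s+1)) (Fin (s+1)) ℤ :=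
  Matrix.of fun l k =>
    if (l : ℕ) = 0 then 1
    else if (l : ℕ) + (k : ℕ) ≤ s then 2 ^ ((l : ℕ) - 1)
    else if (l : ℕ) + (k : ℕ) = s + 1 then -(2 ^ ((l : ℕ) - 1))
    else 0

/-- Entry `θ_{l,k}` as a function of natural numbers. -/
def thetaEnt (s l k : ℕ) : ℤ :=
  if l = 0 then 1
  else if l + k ≤ s then 2 ^ (l - 1)
  else if l + k = s + 1 then -(2 ^ (l - 1))
  else 0

lemma sumA (s j : ℕ) (hj : j ≤ s) :
    ∀ m, m ≤ s → ∑ k ∈ Finset.range (m+1), thetaEnt s k j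
      = if m + j ≤ s then (2:ℤ)^m else 0 := by
  intro m
  induction m with
  | zero =>
    intro _
    simp [thetaEnt, hj]
  | succ m ih =>
    intro hm
    rw [Finset.sum_range_succ, ih (by omega)]
    have h1 : m + 1 ≠ 0 := by omega
    simp only [thetaEnt, h1, if_false, Nat.add_sub_cancel]
    split_ifs with hA hB hC hD hE <;> first
      | (exfalso; omega)
      | ring

theorem theta_sq (s : ℕ) : Theta s * Theta s = (2 ^ s : ℤ) • (1 : Matrix (Fin (s+1)) (Fin (s+1)) ℤ) := by
  ext l j
  rw [Matrix.mul_apply, Matrix.smul_apply, Matrix.one_apply, smul_eq_mul]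
  have hl : (l : ℕ) ≤ s := by omega
  have hj : (j : ℕ) ≤ s := by omega
  have key : ∀ k : Fin (s+1),
      Theta s l k * Theta s k j = thetaEnt s (l:ℕ) (k:ℕ) * thetaEnt s (k:ℕ) (j:ℕ) := by
    intro k; rfl
  simp_rw [key]
  rw [Fin.sum_univ_eq_sum_range (fun k => thetaEnt s (l:ℕ) k * thetaEnt s k (j:ℕ)) (s+1)]
  by_cases h0 : (l : ℕ) = 0
  · have h1 : ∀ k, thetaEnt s (l:ℕ) k = 1 := by intro k; simp [thetaEnt, h0]
    simp only [h1, one_mul]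
    rw [sumA s (j:ℕ) hj s le_rfl]
    have hlj : (l = j) ↔ ((j:ℕ) = 0) := by
      rw [Fin.ext_iff, h0]; exact eq_comm
    by_cases hjz : (j : ℕ) = 0
    · rw [if_pos (by omega), if_pos (hlj.mpr hjz), mul_one]
    · rw [if_neg (by omega), if_neg (fun h => hjz (hlj.mp h)), mul_zero]
  · set a := (l : ℕ) with ha
    have ha1 : 1 ≤ a := by omega
    rw [Finset.range_eq_Ico,
      ← Finset.sum_Ico_consecutive _ (Nat.zero_le (s+1-a)) (by omega : s+1-a ≤ s+1)]
    have e1 : ∑ k ∈ Finset.Ico 0 (s+1-a), thetaEnt s a k * thetaEnt s k (j:ℕ)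
        = 2^(a-1) * (if (s-a) + (j:ℕ) ≤ s then (2:ℤ)^(s-a) else 0) := by
      rw [← Finset.range_eq_Ico]
      have hr : s + 1 - a = (s - a) + 1 := by omega
      rw [hr, ← sumA s (j:ℕ) hj (s-a) (by omega), Finset.mul_sum]
      refine Finset.sum_congr rfl fun k hk => ?_
      rw [Finset.mem_range] at hk
      have : thetaEnt s a k = 2^(a-1) := by
        simp only [thetaEnt, if_neg h0, if_pos (by omega : a + k ≤ s)]
      rw [this]
    have e2 : ∑ k ∈ Finset.Ico (s+1-a) (s+1), thetaEnt s a k * thetaEnt s k (j:ℕ)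
        = -(2^(a-1)) * thetaEnt s (s+1-a) (j:ℕ) := by
      rw [Finset.sum_eq_single_of_mem (s+1-a) (by rw [Finset.mem_Ico]; omega)]
      · congr 1
        simp only [thetaEnt, if_neg h0, if_neg (by omega : ¬ (a + (s+1-a) ≤ s)),
          if_pos (by omega : a + (s+1-a) = s + 1)]
      · intro k hk hne
        rw [Finset.mem_Ico] at hk
        have : thetaEnt s a k = 0 := by
          simp only [thetaEnt, if_neg h0, if_neg (by omega : ¬ (a + k ≤ s)),
            if_neg (by omega : ¬ (a + k = s + 1))]
        rw [this, zero_mul]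
    rw [e1, e2]
    have hpow : (2:ℤ)^(a-1) * 2^(s-a) = 2^(s-1) := by
      rw [← pow_add]; congr 1; omega
    have heq : (l = j) ↔ ((j:ℕ) = a) := by
      rw [Fin.ext_iff]; exact eq_comm
    rcases lt_trichotomy (j:ℕ) a with hlt | heqja | hgt
    · have ht : thetaEnt s (s+1-a) (j:ℕ) = 2^(s-a) := by
        simp only [thetaEnt, if_neg (by omega : ¬ (s+1-a = 0)),
          if_pos (by omega : (s+1-a) + (j:ℕ) ≤ s)]
        congr 1; omega
      rw [ht, if_pos (by omega), if_neg (fun h => absurd (heq.mp h) (by omega))]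
      ring
    · have ht : thetaEnt s (s+1-a) (j:ℕ) = -(2^(s-a)) := by
        simp only [thetaEnt, if_neg (by omega : ¬ (s+1-a = 0)),
          if_neg (by omega : ¬ ((s+1-a) + (j:ℕ) ≤ s)),
          if_pos (by omega : (s+1-a) + (j:ℕ) = s + 1)]
        congr 2; omega
      rw [ht, if_pos (by omega), if_pos (heq.mpr heqja), mul_one]
      have : (2:ℤ)^s = 2^(s-1) * 2 := by
        rw [← pow_succ]; congr 1; omega
      rw [this, ← hpow]; ring
    · have ht : thetaEnt s (s+1-a) (j:ℕ) = 0 := by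
        simp only [thetaEnt, if_neg (by omega : ¬ (s+1-a = 0)),
          if_neg (by omega : ¬ ((s+1-a) + (j:ℕ) ≤ s)),
          if_neg (by omega : ¬ ((s+1-a) + (j:ℕ) = s + 1))]
      rw [ht, if_neg (by omega), if_neg (fun h => by exact absurd (heq.mp h) (by omega))]
      ring
end

section
/- For the (s+1)×(s+1) matrix Θ_s defined by θ_{l,k} = 1 if l = 0; 2^{l-1} if 0 < l ≤ s - k; -2^{l-1} if l + k = s + 1; and 0 if l + k > s + 1, the determinant of Θ_s equals (-1)^{⌈s/2⌉} · 2^{s(s+1)/2}; explicitly, det(Θ_s) = (-1)^{(s+1)/2} 2^{s(s+1)/2} when s is odd and (-1)^{s/2} 2^{s(s+1)/2} when s is even. -/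
/-!
Θ_s is `diagonal (1, 1, 2, …, 2^(s-1))` times the matrix `M_s` with entries `1` for `l + k ≤ s`,
`-1` for `l + k = s + 1` and `0` otherwise. Rows `0` and `1` of `M_(s+1)` differ only in the last
column, by `2`; subtracting them and expanding along row `0` gives
`det M_(s+1) = (-1)^(s+1) * 2 * det M_s`, so `det M_s = (-1)^⌈s/2⌉ * 2^s`, and the powers of two
add up to `2^(s(s+1)/2)`.
-/

open Matrix

def unscaledTheta (s : ℕ) : Matrix (Fin (s+1)) (Fin (s+1)) ℤ :=
  Matrix.of fun l k =>
    if (l : ℕ) + (k : ℕ) ≤ s then 1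
    else if (l : ℕ) + (k : ℕ) = s + 1 then -1 else 0

theorem theta_eq_diagonal_mul_unscaledTheta (s : ℕ) :
    Theta s = diagonal (fun l : Fin (s+1) => (2 : ℤ) ^ ((l : ℕ) - 1)) * unscaledTheta s := by
  ext l k
  -- the scaling of row 0 is `2 ^ (0 - 1) = 1` by truncated subtraction
  rw [diagonal_mul]
  simp only [Theta, unscaledTheta, of_apply]
  by_cases hl : (l : ℕ) = 0
  · simp [hl, Nat.le_of_lt_succ k.is_lt]
  · split_ifs <;> simp_all

theorem unscaledTheta_succ_submatrix_succ_castSucc (s : ℕ) :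
    (unscaledTheta (s+1)).submatrix Fin.succ Fin.castSucc = unscaledTheta s := by
  ext l k
  simp only [submatrix_apply, unscaledTheta, of_apply, Fin.val_succ, Fin.val_castSucc]
  split_ifs <;> omega

theorem unscaledTheta_succ_row_zero_sub_row_one (s : ℕ) :
    unscaledTheta (s+1) 0 - unscaledTheta (s+1) 1 = Pi.single (Fin.last (s+1)) 2 := by
  ext k
  rcases Fin.eq_castSucc_or_eq_last k with ⟨k, rfl⟩ | rfl
  · simp only [unscaledTheta, Pi.sub_apply, of_apply, Fin.val_zero, Fin.val_one, Fin.val_castSucc,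
      zero_add, Fin.is_le', if_true, Pi.single_eq_of_ne (Fin.castSucc_ne_last k)]
    split_ifs <;> omega
  · simp [unscaledTheta, add_comm 1]

theorem det_unscaledTheta_succ (s : ℕ) :
    (unscaledTheta (s+1)).det = (-1) ^ (s+1) * 2 * (unscaledTheta s).det := by
  rw [← det_updateRow_add_smul_self _ (zero_ne_one' (Fin (s+2))) (-1), neg_one_smul,
    ← sub_eq_add_neg, unscaledTheta_succ_row_zero_sub_row_one, det_succ_row _ 0,
    Finset.sum_eq_single (Fin.last (s+1))]
  · rw [submatrix_updateRow_succAbove, Fin.succAbove_zero, Fin.succAbove_last,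
      unscaledTheta_succ_submatrix_succ_castSucc]
    simp
  · intro j _ hj
    simp [hj]
  · simp

theorem det_unscaledTheta (s : ℕ) : (unscaledTheta s).det = (-1) ^ ((s + 1) / 2) * 2 ^ s := by
  induction s with
  | zero => simp [unscaledTheta]
  | succ s ih =>
    have sign : (-1 : ℤ) ^ ((s + 2) / 2) = (-1) ^ (s + 1) * (-1) ^ ((s + 1) / 2) := by
      rw [← pow_add, neg_one_pow_eq_pow_mod_two, neg_one_pow_eq_pow_mod_two (s + 1 + _)]
      congr 1
      rcases Nat.even_or_odd' s with ⟨k, rfl | rfl⟩ <;> omega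
    rw [det_unscaledTheta_succ, ih, sign]
    ring

theorem sum_pred_add_self (s : ℕ) : ∑ l : Fin (s+1), ((l : ℕ) - 1) + s = s * (s + 1) / 2 := by
  rw [Fin.sum_univ_succ]
  simp only [Fin.val_zero, Fin.val_succ, Nat.add_sub_cancel, zero_tsub, zero_add]
  rw [Fin.sum_univ_eq_sum_range (fun i => i), ← Finset.sum_range_succ, Finset.sum_range_id,
    Nat.add_sub_cancel, mul_comm]

theorem det_Theta (s : ℕ) : (Theta s).det = (-1) ^ ((s + 1) / 2) * 2 ^ (s * (s + 1) / 2) := by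
  rw [theta_eq_diagonal_mul_unscaledTheta, det_mul, det_diagonal, det_unscaledTheta,
    Finset.prod_pow_eq_pow_sum, ← sum_pred_add_self, pow_add]
  ring

theorem theta_det (s : ℕ) :
    (Theta s).det = (-1) ^ ((s + 1) / 2) * 2 ^ (s * (s + 1) / 2) ∧
    (Odd s → (Theta s).det = (-1) ^ ((s + 1) / 2) * 2 ^ (s * (s + 1) / 2)) ∧
    (Even s → (Theta s).det = (-1) ^ (s / 2) * 2 ^ (s * (s + 1) / 2)) := by
  refine ⟨det_Theta s, fun _ => det_Theta s, fun ⟨m, hm⟩ => ?_⟩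
  rw [det_Theta, show (s + 1) / 2 = s / 2 by omega]
end

section
/- For the matrix Θ_s as above with s ≥ 1, the determinant satisfies the recursion det(Θ_s) = (-1)^s · 2^s · det(Θ_{s-1}), where Θ_0 = (1). -/
/-- The scaled matrix appearing as both relevant minors. -/
def ThetaM (s : ℕ) : Matrix (Fin (s+1)) (Fin (s+1)) ℤ :=
  Matrix.of fun j k => (if (j : ℕ) = 0 then 1 else 2) * Theta s j k

lemma thetaM_det (s : ℕ) : (ThetaM s).det = 2 ^ s * (Theta s).det := by
  have h : (ThetaM s).det = (∏ j : Fin (s+1), (if (j : ℕ) = 0 then (1:ℤ) else 2)) *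
      (Theta s).det := Matrix.det_mul_column _ _
  rw [h]
  congr 1
  rw [Fin.prod_univ_succ]
  simp

lemma minor0 (s : ℕ) :
    (Theta (s+1)).submatrix (Fin.succAbove 0) (Fin.succAbove (Fin.last (s+1))) = ThetaM s := by
  ext j k
  simp only [Matrix.submatrix_apply, Fin.succAbove_zero, Fin.succAbove_last, Theta, ThetaM,
    Matrix.of_apply, Fin.val_succ, Fin.coe_castSucc]
  rcases Nat.eq_zero_or_pos (j : ℕ) with hj | hj
  · have hk : (k : ℕ) ≤ s := Nat.lt_succ_iff.mp k.isLt
    simp only [hj, Nat.zero_add, if_true, Nat.succ_ne_zero, if_false]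
    rw [if_pos (by omega : 0 + 1 + (k:ℕ) ≤ s + 1)]
    norm_num
  · have hj' : (j : ℕ) ≠ 0 := hj.ne'
    have h2 : (2:ℤ) ^ ((j:ℕ) + 1 - 1) = 2 * 2 ^ ((j:ℕ) - 1) := by
      rw [Nat.add_sub_cancel]
      conv_lhs => rw [← Nat.succ_pred_eq_of_pos hj]
      rw [pow_succ, mul_comm, Nat.sub_one]
    have c1 : ((j:ℕ) + 1 + (k:ℕ) ≤ s + 1) ↔ ((j:ℕ) + (k:ℕ) ≤ s) := by omega
    have c2 : ((j:ℕ) + 1 + (k:ℕ) = s + 1 + 1) ↔ ((j:ℕ) + (k:ℕ) = s + 1) := by omega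
    simp only [Nat.succ_ne_zero, if_false, hj', c1, c2, h2]
    split_ifs <;> ring

lemma minor1 (s : ℕ) :
    (Theta (s+1)).submatrix (Fin.succAbove 1) (Fin.succAbove (Fin.last (s+1))) = ThetaM s := by
  ext j k
  simp only [Matrix.submatrix_apply, Fin.succAbove_last, Theta, ThetaM,
    Matrix.of_apply, Fin.coe_castSucc]
  rcases Nat.eq_zero_or_pos (j : ℕ) with hj | hj
  · have hj0 : j = 0 := Fin.ext hj
    subst hj0
    have : (Fin.succAbove 1 (0 : Fin (s+1)) : ℕ) = 0 := by
      simp [Fin.succAbove]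
    simp [this]
  · have hj' : (j : ℕ) ≠ 0 := hj.ne'
    have hval : (Fin.succAbove 1 j : ℕ) = (j : ℕ) + 1 := by
      rw [Fin.succAbove]
      rw [if_neg]
      · simp
      · simp only [Fin.lt_iff_val_lt_val, Fin.coe_castSucc]
        have : (1 : Fin (s+2)).val = 1 := rfl
        omega
    have h2 : (2:ℤ) ^ ((j:ℕ) + 1 - 1) = 2 * 2 ^ ((j:ℕ) - 1) := by
      rw [Nat.add_sub_cancel]
      conv_lhs => rw [← Nat.succ_pred_eq_of_pos hj]
      rw [pow_succ, mul_comm, Nat.sub_one]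
    have c1 : ((j:ℕ) + 1 + (k:ℕ) ≤ s + 1) ↔ ((j:ℕ) + (k:ℕ) ≤ s) := by omega
    have c2 : ((j:ℕ) + 1 + (k:ℕ) = s + 1 + 1) ↔ ((j:ℕ) + (k:ℕ) = s + 1) := by omega
    rw [hval]
    simp only [Nat.succ_ne_zero, if_false, hj', c1, c2, h2]
    split_ifs <;> ring

theorem theta_det_rec (s : ℕ) :
    (Theta 0).det = 1 ∧
    (Theta (s + 1)).det = (-1) ^ (s + 1) * 2 ^ (s + 1) * (Theta s).det := by
  constructor
  · simp [Theta]
  · rw [Matrix.det_succ_column (Theta (s+1)) (Fin.last (s+1))]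
    rw [Fin.sum_univ_succ, Fin.sum_univ_succ]
    have h0 : Theta (s+1) 0 (Fin.last (s+1)) = 1 := by simp [Theta]
    have h1 : Theta (s+1) (Fin.succ 0) (Fin.last (s+1)) = -1 := by
      have hv : ((Fin.succ (0 : Fin (s+1))) : ℕ) = 1 := by simp
      simp only [Theta, Matrix.of_apply, hv, Fin.val_last]
      rw [if_neg (by omega), if_neg (by omega), if_pos (by omega)]
      norm_num
    have htail : ∀ i : Fin s, Theta (s+1) ((i.succ).succ) (Fin.last (s+1)) = 0 := by
      intro i
      simp only [Theta, Matrix.of_apply, Fin.val_succ, Fin.val_last]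
      rw [if_neg (by omega), if_neg (by omega), if_neg (by omega)]
    have hsum : (∑ i : Fin s, (-1 : ℤ) ^ (((i.succ).succ : ℕ) + ((Fin.last (s+1)) : ℕ)) *
        Theta (s+1) ((i.succ).succ) (Fin.last (s+1)) *
        ((Theta (s+1)).submatrix ((i.succ).succ).succAbove
          (Fin.last (s+1)).succAbove).det) = 0 := by
      apply Finset.sum_eq_zero
      intro i _
      rw [htail i, mul_zero, zero_mul]
    rw [h0, h1, hsum, Fin.succ_zero_eq_one]
    rw [minor0 s, minor1 s, thetaM_det]
    simp only [Fin.val_zero, Fin.val_one, Fin.val_last, Nat.zero_add]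
    have hp : ((-1 : ℤ)) ^ (1 + (s + 1)) = (-1) * (-1) ^ (s+1) := by
      rw [pow_add]; ring
    rw [hp, pow_succ 2 s]
    ring
end

section
/- Let C ⊆ F_q^s be a k-dimensional linear code and C⊥ its dual with respect to the standard inner product, of dimension k⊥ = s - k. Then the code C_o = {(v, flip(u)) : v ∈ C, u ∈ C⊥} ⊆ F_q^{2s} is self-orthogonal of dimension k + k⊥ = s with respect to the NRT inner product on M_{1,2s}(F_q), i.e., ⟨x, y⟩_N = 0 for all x, y ∈ C_o. -/
open Finset

/-- The standard inner product bilinear form on `F^m`. -/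
def stdForm (F : Type*) [Field F] (m : ℕ) : LinearMap.BilinForm F (Fin m → F) :=
  LinearMap.mk₂ F (fun u v => ∑ j, u j * v j)
    (by intro u u' v; simp [add_mul, Finset.sum_add_distrib])
    (by intro c u v; simp [smul_eq_mul, Finset.mul_sum, mul_assoc])
    (by intro u v v'; simp [mul_add, Finset.sum_add_distrib])
    (by intro c u v; simp [smul_eq_mul, Finset.mul_sum, mul_left_comm])

/-- The NRT bilinear form on `F^m = M_{1,m}(F)`: `⟨x,y⟩_N = Σ_j x_j y_{m+1-j}`. -/
def nrtForm (F : Type*) [Field F] (m : ℕ) : LinearMap.BilinForm F (Fin m → F) :=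
  LinearMap.mk₂ F (fun u v => ∑ j, u j * v j.rev)
    (by intro u u' v; simp [add_mul, Finset.sum_add_distrib])
    (by intro c u v; simp [smul_eq_mul, Finset.mul_sum, mul_assoc])
    (by intro u v v'; simp [mul_add, Finset.sum_add_distrib])
    (by intro c u v; simp [smul_eq_mul, Finset.mul_sum, mul_left_comm])

/-- The flip of a vector: `flip (v_1, …, v_s) = (v_s, …, v_1)`. -/
def flipVec {F : Type*} {s : ℕ} (v : Fin s → F) : Fin s → F := fun j => v j.rev

/-! The NRT form pairs the first half of one word with the reversed second half of the other, so
on words `(v, flip u)` and `(v', flip u')` it equals `⟨v, u'⟩ + ⟨v', u⟩`, which vanishes when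
`u, u' ∈ C⊥`. The code is the image of `C × C⊥` under the injective linear map
`(v, u) ↦ (v, flip u)`, and `dim C + dim C⊥ = s` because the standard form is nondegenerate. -/

section AppendLinear

variable (R : Type*) [Semiring R] (m n : ℕ)

def appendLinearEquiv : ((Fin m → R) × (Fin n → R)) ≃ₗ[R] (Fin (m + n) → R) where
  __ := Fin.appendEquiv m n
  map_add' p q := by
    funext i
    induction i using Fin.addCases <;> simp [Fin.appendEquiv]
  map_smul' c p := by
    funext i
    induction i using Fin.addCases <;> simp [Fin.appendEquiv]

end AppendLinear

section FlipCode

variable {F : Type*} [Field F] {m n s : ℕ}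

lemma stdForm_apply (u v : Fin m → F) : stdForm F m u v = ∑ j, u j * v j := rfl

lemma nrtForm_apply (x y : Fin m → F) : nrtForm F m x y = ∑ j, x j * y j.rev := rfl

lemma stdForm_nondegenerate : (stdForm F m).Nondegenerate := by
  refine ⟨fun v h => ?_, fun v h => ?_⟩ <;> funext j <;>
    simpa [stdForm_apply, Pi.single_apply] using h (Pi.single j 1)

lemma finrank_add_finrank_stdForm_orthogonal (C : Submodule F (Fin m → F)) :
    Module.finrank F C + Module.finrank F ((stdForm F m).orthogonal C) = m := by
  have hC := Submodule.finrank_le C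
  rw [Module.finrank_fin_fun] at hC
  rw [LinearMap.BilinForm.finrank_orthogonal stdForm_nondegenerate, Module.finrank_fin_fun]
  omega

lemma nrtForm_append_flipVec (v u v' u' : Fin s → F) :
    nrtForm F (s + s) (Fin.append v (flipVec u)) (Fin.append v' (flipVec u')) =
      stdForm F s v u' + stdForm F s v' u := by
  rw [nrtForm_apply, Fin.sum_univ_add, stdForm_apply, stdForm_apply,
    ← Equiv.sum_comp Fin.revPerm (fun j => v' j * u j)]
  congr 1 <;> refine Finset.sum_congr rfl fun j _ => ?_
  · rw [Fin.rev_castAdd, ← Fin.natAdd_eq_addNat, Fin.append_left, Fin.append_right, flipVec,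
      Fin.rev_rev]
  · rw [Fin.natAdd_eq_addNat, Fin.rev_addNat, ← Fin.natAdd_eq_addNat, Fin.append_left,
      Fin.append_right, flipVec, mul_comm, Fin.revPerm_apply]

variable (C : Submodule F (Fin m → F)) (D : Submodule F (Fin n → F))

def flipAppend : (C × D) →ₗ[F] (Fin (m + n) → F) :=
  (appendLinearEquiv F m n).toLinearMap ∘ₗ
    C.subtype.prodMap ((LinearEquiv.funCongrLeft F F Fin.revPerm).toLinearMap ∘ₗ D.subtype)

lemma flipAppend_apply (p : C × D) : flipAppend C D p = Fin.append p.1 (flipVec p.2) := rfl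

lemma flipAppend_injective : Function.Injective (flipAppend C D) :=
  (appendLinearEquiv F m n).injective.comp <| by
    rw [LinearMap.coe_prodMap, LinearMap.coe_comp]
    exact Prod.map_injective.2
      ⟨C.injective_subtype, (LinearEquiv.injective _).comp D.injective_subtype⟩

def flipCode : Submodule F (Fin (m + n) → F) := LinearMap.range (flipAppend C D)

lemma mem_flipCode {x : Fin (m + n) → F} :
    x ∈ flipCode C D ↔ ∃ v ∈ C, ∃ u ∈ D, x = Fin.append v (flipVec u) := by
  simp [flipCode, flipAppend_apply, eq_comm]

lemma finrank_flipCode :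
    Module.finrank F (flipCode C D) = Module.finrank F C + Module.finrank F D := by
  rw [flipCode, LinearMap.finrank_range_of_inj (flipAppend_injective C D), Module.finrank_prod]

lemma flipCode_nrtForm_eq_zero {C D : Submodule F (Fin s → F)}
    (hD : D ≤ (stdForm F s).orthogonal C) {x y : Fin (s + s) → F}
    (hx : x ∈ flipCode C D) (hy : y ∈ flipCode C D) : nrtForm F (s + s) x y = 0 := by
  obtain ⟨v, hv, u, hu, rfl⟩ := (mem_flipCode C D).1 hx
  obtain ⟨v', hv', u', hu', rfl⟩ := (mem_flipCode C D).1 hy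
  rw [nrtForm_append_flipVec, LinearMap.BilinForm.mem_orthogonal_iff.1 (hD hu') v hv,
    LinearMap.BilinForm.mem_orthogonal_iff.1 (hD hu) v' hv', add_zero]

end FlipCode

theorem flip_construction_selfOrthogonal_general (F : Type*) [Field F] (s : ℕ)
    (C : Submodule F (Fin s → F)) (Cperp : Submodule F (Fin s → F))
    (hperp : Cperp = (stdForm F s).orthogonal C)
    (Co : Submodule F (Fin (s + s) → F))
    (hCo : (Co : Set (Fin (s + s) → F)) =
      {x | ∃ v ∈ C, ∃ u ∈ Cperp, x = Fin.append v (flipVec u)}) :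
    (∀ x ∈ Co, ∀ y ∈ Co, nrtForm F (s + s) x y = 0) ∧
    Module.finrank F Co = Module.finrank F C + Module.finrank F Cperp ∧
    Module.finrank F Co = s := by
  have hCo_eq : Co = flipCode C Cperp := by
    ext x
    rw [← SetLike.mem_coe, hCo, mem_flipCode]
    rfl
  subst hCo_eq hperp
  refine ⟨fun x hx y hy => flipCode_nrtForm_eq_zero le_rfl hx hy, finrank_flipCode _ _, ?_⟩
  rw [finrank_flipCode, finrank_add_finrank_stdForm_orthogonal]

/-- From a code `C` and its standard dual `C⊥`, the code
`C_o = {(v, flip u) : v ∈ C, u ∈ C⊥} ⊆ F^{2s}` is self-orthogonal of dimension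
`dim C + dim C⊥ = s` with respect to the NRT inner product. -/
theorem flip_construction_selfOrthogonal (F : Type*) [Field F] [Fintype F] (s : ℕ)
    (C : Submodule F (Fin s → F)) (Cperp : Submodule F (Fin s → F))
    (hperp : Cperp = (stdForm F s).orthogonal C)
    (Co : Submodule F (Fin (s + s) → F))
    (hCo : (Co : Set (Fin (s + s) → F)) =
      {x | ∃ v ∈ C, ∃ u ∈ Cperp, x = Fin.append v (flipVec u)}) :
    (∀ x ∈ Co, ∀ y ∈ Co, nrtForm F (s + s) x y = 0) ∧
    Module.finrank F Co = Module.finrank F C + Module.finrank F Cperp ∧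
    Module.finrank F Co = s :=
  flip_construction_selfOrthogonal_general F s C Cperp hperp Co hCo
end

section
/- Polynomials f₁, …, f_n ∈ C[x₁, …, x_n] are algebraically independent over C if the determinant of the Jacobian matrix (∂f_i/∂x_j) is a nonzero polynomial. -/
/-!
If `P` were a nonzero polynomial of least total degree with `P(f) = 0`, the chain rule gives
`∑ᵢ (∂ᵢP)(f) · ∂ⱼfᵢ = ∂ⱼ(P(f)) = 0` for every `j`, i.e. the vector `((∂ᵢP)(f))ᵢ` is killed by the
Jacobian matrix. Its determinant is nonzero, so every `(∂ᵢP)(f)` vanishes; since `∂ᵢP` has smaller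
degree, minimality forces `∂ᵢP = 0` for all `i`. In characteristic zero this makes `P` a constant,
and a constant that vanishes at `f` is zero.
-/

open MvPolynomial Matrix

namespace MvPolynomial

variable {R : Type*} {σ : Type*}

theorem derivation_aeval {A M ι : Type*} [CommSemiring R] [CommSemiring A] [Algebra R A]
    [AddCommMonoid M] [Module A M] [Module R M] [IsScalarTower R A M] [Fintype ι]
    (D : Derivation R A M) (x : ι → A) (P : MvPolynomial ι R) :
    D (aeval x P) = ∑ i, aeval x (pderiv i P) • D (x i) := by
  classical
  induction P using MvPolynomial.induction_on with
  | C a => simp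
  | add p q hp hq => simp [hp, hq, add_smul, Finset.sum_add_distrib]
  | mul_X p k hp =>
    simp [hp, pderiv_X, Pi.single_apply, apply_ite (aeval x), ite_smul, add_smul,
      Finset.sum_add_distrib, Finset.smul_sum, mul_smul, smul_comm (x k)]

theorem totalDegree_pderiv_lt [CommSemiring R] {P : MvPolynomial σ R} {i : σ}
    (h : pderiv i P ≠ 0) : (pderiv i P).totalDegree < P.totalDegree := by
  have hdeg : ∀ m ∈ (pderiv i P).support, (m.sum fun _ e => e) < P.totalDegree := by
    intro m hm
    have hcoeff : coeff (m + Finsupp.single i 1) P ≠ 0 := by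
      intro h0
      simp [mem_support_iff, coeff_pderiv, h0] at hm
    calc (m.sum fun _ e => e) < (m + Finsupp.single i 1).sum fun _ e => e := by
          rw [Finsupp.sum_add_index' (fun _ => rfl) (fun _ _ _ => rfl),
            Finsupp.sum_single_index rfl]
          exact Nat.lt_succ_self _
      _ ≤ P.totalDegree := le_totalDegree (mem_support_iff.mpr hcoeff)
  obtain ⟨m, hm⟩ := support_nonempty.mpr h
  exact (Finset.sup_lt_iff ((Nat.zero_le _).trans_lt (hdeg m hm))).mpr hdeg

theorem eq_C_of_forall_pderiv_eq_zero [CommSemiring R] [IsAddTorsionFree R]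
    {P : MvPolynomial σ R} (h : ∀ i, pderiv i P = 0) : P = C (coeff 0 P) := by
  classical
  ext m
  rw [coeff_C]
  split_ifs with hm
  · rw [hm]
  obtain ⟨i, hi⟩ := Finsupp.ne_iff.mp (Ne.symm hm)
  have hle : Finsupp.single i 1 ≤ m := Finsupp.single_le_iff.mpr (Nat.one_le_iff_ne_zero.mpr hi)
  have hcoeff := coeff_pderiv (i := i) P (m - Finsupp.single i 1)
  rw [h i, tsub_add_cancel_of_le hle, coeff_zero, mul_comm, ← Nat.cast_succ,
    ← nsmul_eq_mul] at hcoeff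
  exact IsAddTorsionFree.nsmul_right_injective (Nat.succ_ne_zero _) (by simpa using hcoeff.symm)

noncomputable def jacobian {ι : Type*} [CommSemiring R] (f : ι → MvPolynomial σ R) :
    Matrix ι σ (MvPolynomial σ R) :=
  Matrix.of fun i j => pderiv j (f i)

theorem pderiv_aeval_eq_vecMul_jacobian {ι : Type*} [CommSemiring R] [Fintype ι]
    (f : ι → MvPolynomial σ R) (P : MvPolynomial ι R) :
    (fun j => pderiv j (aeval f P)) = (fun i => aeval f (pderiv i P)) ᵥ* jacobian f := by
  ext1 j
  simp only [derivation_aeval, vecMul, dotProduct, jacobian, of_apply, smul_eq_mul]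

theorem aeval_pderiv_eq_zero_of_det_jacobian_ne_zero [CommRing R] [IsDomain R] [Fintype σ]
    [DecidableEq σ] {f : σ → MvPolynomial σ R} (hf : (jacobian f).det ≠ 0)
    {P : MvPolynomial σ R} (hP : aeval f P = 0) (i : σ) : aeval f (pderiv i P) = 0 := by
  have hgrad : (fun i => aeval f (pderiv i P)) ᵥ* jacobian f = 0 := by
    rw [← pderiv_aeval_eq_vecMul_jacobian, hP]
    ext1 j
    exact map_zero (pderiv j)
  exact congrFun (Matrix.eq_zero_of_vecMul_eq_zero hf hgrad) i

theorem algebraicIndependent_of_det_jacobian_ne_zero [CommRing R] [IsDomain R] [CharZero R]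
    [Fintype σ] [DecidableEq σ] {f : σ → MvPolynomial σ R} (hf : (jacobian f).det ≠ 0) :
    AlgebraicIndependent R f := by
  rw [algebraicIndependent_iff]
  intro P hP
  induction hd : P.totalDegree using Nat.strong_induction_on generalizing P with
  | _ d ih =>
    have hpderiv : ∀ i, pderiv i P = 0 := fun i => by
      by_contra hne
      exact hne <| ih _ (hd ▸ totalDegree_pderiv_lt hne) _
        (aeval_pderiv_eq_zero_of_det_jacobian_ne_zero hf hP i) rfl
    rw [eq_C_of_forall_pderiv_eq_zero hpderiv, aeval_C, algebraMap_eq, C_eq_zero] at hP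
    rw [eq_C_of_forall_pderiv_eq_zero hpderiv, hP, C_0]

end MvPolynomial

/-- Jacobian criterion: `n` polynomials in `n` variables over `ℂ` are algebraically
independent if the determinant of the Jacobian matrix `(∂f_i/∂x_j)` is nonzero. -/
theorem jacobian_criterion (n : ℕ) (f : Fin n → MvPolynomial (Fin n) ℂ)
    (h : (Matrix.of fun i j => pderiv j (f i)).det ≠ 0) :
    AlgebraicIndependent ℂ f :=
  algebraicIndependent_of_det_jacobian_ne_zero h
end
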